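/- Let X, Y, Z be independent nonnegative random variables with X integrable in the sense that E[ln(1 + X/(Y + Z + σ²))] < ∞, and σ² > 0. Then E[log₂(1 + X/(Y + Z + σ²))] = (1/ln 2) ∫₀^∞ (e^{-sσ²}/s) · E[e^{-sY}] · E[e^{-sZ}] · (1 - E[e^{-sX}]) ds. -/

import Mathlib

open MeasureTheory ProbabilityTheory

/-! Frullani's integral `∫₀^∞ (e^{-sa} - e^{-sb}) / s ds = log (b / a)` writes `ln (1 + X / D)`,
with `D = Y + Z + σ²`, as the integral over `s > 0` of `(e^{-sD} - e^{-s(D + X)}) / s`. This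
integrand is nonnegative, so Tonelli moves the expectation inside, and independence factors
`E[e^{-sD}]` and `E[e^{-s(D + X)}]` into products of Laplace transforms of `X`, `Y` and `Z`. -/

open Set Real Function Filter Topology

lemma exp_neg_mul_sub_exp_neg_mul_le (s a b : ℝ) :
    exp (-(s * a)) - exp (-(s * b)) ≤ (b - a) * s * exp (-(s * a)) := by
  have h := add_one_le_exp (-(s * (b - a)))
  have : exp (-(s * b)) = exp (-(s * a)) * exp (-(s * (b - a))) := by
    rw [← exp_add]; ring_nf
  rw [this]
  nlinarith [exp_pos (-(s * a))]

lemma integrableOn_exp_neg_mul_sub_div {a b : ℝ} (ha : 0 < a) (hb : 0 < b) :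
    IntegrableOn (fun s => (exp (-(s * a)) - exp (-(s * b))) / s) (Ioi 0) := by
  wlog hab : a ≤ b generalizing a b
  · convert (this hb ha (le_of_not_ge hab)).neg using 2
    rw [Pi.neg_apply, ← neg_div, neg_sub]
  have hdom : Integrable (fun s => (b - a) * exp (-(s * a))) (volume.restrict (Ioi 0)) := by
    simpa only [neg_mul, mul_comm a] using (exp_neg_integrableOn_Ioi 0 ha).const_mul (b - a)
  have hmeas : Measurable fun s => (exp (-(s * a)) - exp (-(s * b))) / s := by fun_prop
  refine hdom.mono' hmeas.aestronglyMeasurable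
    ((ae_restrict_mem measurableSet_Ioi).mono fun s (hs : 0 < s) => ?_)
  have hle := exp_neg_mul_sub_exp_neg_mul_le s a b
  have hnn : exp (-(s * b)) ≤ exp (-(s * a)) := exp_le_exp.2 (by nlinarith)
  rw [norm_of_nonneg (div_nonneg (sub_nonneg.2 hnn) hs.le), div_le_iff₀ hs]
  linarith

lemma integral_exp_neg_mul_sub_div {a b : ℝ} (ha : 0 < a) (hb : 0 < b) :
    ∫ s in Ioi 0, (exp (-(s * a)) - exp (-(s * b))) / s = log (b / a) := by
  have hf : Continuous fun x : ℝ => exp (-x) := by fun_prop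
  have hf0 : Tendsto (fun x : ℝ => exp (-x)) (𝓝[>] 0) (𝓝 1) := by
    simpa only [neg_zero, exp_zero] using (hf.tendsto 0).mono_left nhdsWithin_le_nhds
  have h := Frullani.integral_Ioi_eq (hf.locallyIntegrable.locallyIntegrableOn _) ha hb hf0
    tendsto_exp_neg_atTop_nhds_zero ?_
  · simpa only [mul_comm, div_eq_inv_mul, smul_eq_mul, sub_zero, one_mul] using h
  · simpa only [smul_eq_mul, mul_comm, div_eq_inv_mul] using integrableOn_exp_neg_mul_sub_div ha hb

section

variable {Ω : Type*} [MeasurableSpace Ω] {μ : Measure Ω}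

theorem integral_log_div_eq_setIntegral_Ioi_integral [SFinite μ] {a b : Ω → ℝ}
    (hma : Measurable a) (hmb : Measurable b) (ha : ∀ ω, 0 < a ω) (hab : ∀ ω, a ω ≤ b ω)
    (hint : Integrable (fun ω => log (b ω / a ω)) μ) :
    ∫ ω, log (b ω / a ω) ∂μ
      = ∫ s in Ioi 0, ∫ ω, (exp (-(s * a ω)) - exp (-(s * b ω))) / s ∂μ := by
  set g : Ω → ℝ → ℝ := fun ω s => (exp (-(s * a ω)) - exp (-(s * b ω))) / s
  have hb ω : 0 < b ω := (ha ω).trans_le (hab ω)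
  have hg_nonneg ω : ∀ s ∈ Ioi (0 : ℝ), 0 ≤ g ω s := fun s (hs : 0 < s) =>
    div_nonneg (sub_nonneg.2 (exp_le_exp.2 (by nlinarith [hab ω]))) hs.le
  have hg_integral ω : ∫ s in Ioi 0, g ω s = log (b ω / a ω) :=
    integral_exp_neg_mul_sub_div (ha ω) (hb ω)
  have hg : Integrable (uncurry g) (μ.prod (volume.restrict (Ioi 0))) := by
    refine (integrable_prod_iff (by fun_prop : Measurable (uncurry g)).aestronglyMeasurable).2
      ⟨ae_of_all _ fun ω => integrableOn_exp_neg_mul_sub_div (ha ω) (hb ω), hint.congr ?_⟩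
    refine ae_of_all _ fun ω => (hg_integral ω).symm.trans ?_
    exact setIntegral_congr_fun measurableSet_Ioi fun s hs =>
      (norm_of_nonneg (hg_nonneg ω s hs)).symm
  rw [← integral_integral_swap hg]
  exact integral_congr_ae (ae_of_all _ fun ω => (hg_integral ω).symm)

lemma ProbabilityTheory.iIndepFun.integral_exp_neg_mul_sum {ι : Type*} {X : ι → Ω → ℝ}
    (h : iIndepFun X μ) (hm : ∀ i, Measurable (X i)) (u : Finset ι) (s : ℝ) :
    ∫ ω, exp (-(s * ∑ i ∈ u, X i ω)) ∂μ = ∏ i ∈ u, ∫ ω, exp (-(s * X i ω)) ∂μ := by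
  simpa [mgf, neg_mul, Finset.sum_apply] using h.mgf_sum (t := -s) hm u

lemma integrable_exp_neg_mul_of_nonneg [IsFiniteMeasure μ] {W : Ω → ℝ} (hW : Measurable W)
    (hW0 : ∀ ω, 0 ≤ W ω) {s : ℝ} (hs : 0 ≤ s) : Integrable (fun ω => exp (-(s * W ω))) μ :=
  .of_bound (by fun_prop) 1 (ae_of_all _ fun ω => by
    rw [norm_of_nonneg (exp_pos _).le, exp_le_one_iff, neg_nonpos]
    exact mul_nonneg hs (hW0 ω))

lemma integral_exp_neg_mul_sub_div_of_iIndepFun {X Y Z : Ω → ℝ}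
    (hmX : Measurable X) (hmY : Measurable Y) (hmZ : Measurable Z)
    (hX : ∀ ω, 0 ≤ X ω) (hY : ∀ ω, 0 ≤ Y ω) (hZ : ∀ ω, 0 ≤ Z ω)
    (hindep : iIndepFun ![X, Y, Z] μ) {s : ℝ} (hs : 0 ≤ s) (c : ℝ) :
    ∫ ω, (exp (-(s * (Y ω + Z ω + c))) - exp (-(s * (Y ω + Z ω + c + X ω)))) / s ∂μ
      = exp (-(s * c)) / s * (∫ ω, exp (-(s * Y ω)) ∂μ) * (∫ ω, exp (-(s * Z ω)) ∂μ) *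
          (1 - ∫ ω, exp (-(s * X ω)) ∂μ) := by
  have := hindep.isProbabilityMeasure
  have hm : ∀ i, Measurable (![X, Y, Z] i) := by
    intro i; fin_cases i <;> assumption
  have hYZ ω : ∑ i ∈ {1, 2}, ![X, Y, Z] i ω = Y ω + Z ω := by simp
  have hXYZ ω : ∑ i, ![X, Y, Z] i ω = X ω + Y ω + Z ω := by simp [Fin.sum_univ_three]
  have hsplit ω : (exp (-(s * (Y ω + Z ω + c))) - exp (-(s * (Y ω + Z ω + c + X ω)))) / s
      = exp (-(s * c)) / s * (exp (-(s * ∑ i ∈ {1, 2}, ![X, Y, Z] i ω))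
          - exp (-(s * ∑ i, ![X, Y, Z] i ω))) := by
    rw [hYZ, hXYZ, div_mul_eq_mul_div, mul_sub, ← exp_add, ← exp_add]
    ring_nf
  simp_rw [hsplit]
  rw [integral_const_mul, integral_sub, hindep.integral_exp_neg_mul_sum hm,
    hindep.integral_exp_neg_mul_sum hm]
  · rw [Finset.prod_pair (by decide), Fin.prod_univ_three]
    simp only [Matrix.cons_val_zero, Matrix.cons_val_one, Matrix.cons_val_two, Matrix.tail_cons,
      Matrix.head_cons]
    ring
  · exact integrable_exp_neg_mul_of_nonneg (by fun_prop)
      (fun ω => by rw [hYZ]; linarith [hY ω, hZ ω]) hs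
  · exact integrable_exp_neg_mul_of_nonneg (by fun_prop)
      (fun ω => by rw [hXYZ]; linarith [hX ω, hY ω, hZ ω]) hs

end

/-- Let `X, Y, Z` be independent nonnegative random variables with
`E[ln(1 + X/(Y+Z+σ²))] < ∞` (i.e. the log-expression is integrable) and `σ² > 0`.  Then
`E[log₂(1 + X/(Y+Z+σ²))]
  = (1/ln 2) ∫₀^∞ (e^{-sσ²}/s) E[e^{-sY}] E[e^{-sZ}] (1 - E[e^{-sX}]) ds`. -/
theorem ergodic_capacity_laplace_form {Ω : Type*} [MeasurableSpace Ω] (P : Measure Ω)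
    [IsProbabilityMeasure P] (X Y Z : Ω → ℝ) (σ2 : ℝ) (hσ : 0 < σ2)
    (hmX : Measurable X) (hmY : Measurable Y) (hmZ : Measurable Z)
    (hX : ∀ ω, 0 ≤ X ω) (hY : ∀ ω, 0 ≤ Y ω) (hZ : ∀ ω, 0 ≤ Z ω)
    (hindep : iIndepFun ![X, Y, Z] P)
    (hint : Integrable (fun ω => Real.log (1 + X ω / (Y ω + Z ω + σ2))) P) :
    ∫ ω, Real.logb 2 (1 + X ω / (Y ω + Z ω + σ2)) ∂P
      = (1 / Real.log 2) *
        ∫ s in Set.Ioi (0 : ℝ),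
          (Real.exp (-(s * σ2)) / s) * (∫ ω, Real.exp (-(s * Y ω)) ∂P) *
            (∫ ω, Real.exp (-(s * Z ω)) ∂P) * (1 - ∫ ω, Real.exp (-(s * X ω)) ∂P) := by
  have hD ω : 0 < Y ω + Z ω + σ2 := by linarith [hY ω, hZ ω]
  have hlog ω :
      1 + X ω / (Y ω + Z ω + σ2) = (Y ω + Z ω + σ2 + X ω) / (Y ω + Z ω + σ2) := by
    rw [add_div, div_self (hD ω).ne']
  simp only [logb, hlog] at hint ⊢
  rw [integral_div, integral_log_div_eq_setIntegral_Ioi_integral (by fun_prop) (by fun_prop) hD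
    (fun ω => le_add_of_nonneg_right (hX ω)) hint, one_div_mul_eq_div]
  congr 1
  exact setIntegral_congr_fun measurableSet_Ioi fun s hs =>
    integral_exp_neg_mul_sub_div_of_iIndepFun hmX hmY hmZ hX hY hZ hindep (le_of_lt hs) σ2
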